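/- arXiv:1901.02234 — 4 statements merged into one kernel-verified Lean document; each statement's English description precedes it below -/
import Mathlib

section
/- For every complex number z with Re(z) > 1/k, ∑_{r≥1} w_k(r)/r^{1+z} = ζ(z+1)·ζ(kz), where ζ is the Riemann zeta function. -/
/-- `wk k r = ∑_{m^k ∣ r} m^k`, sum over positive integers `m` with `m^k ∣ r`. -/
def wk (k r : ℕ) : ℕ := ∑ m ∈ Finset.Icc 1 r, if m ^ k ∣ r then m ^ k else 0

/-!
With `P k := (range (· ^ k)).indicator (↑)`, equal to `n` on `k`-th powers and `0` elsewhere,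
`w_k(r) = ∑_{d ∣ r} P k d`, i.e. `w_k = P k ⍟ 1`, so the Dirichlet series of `w_k` is
`L(P k, s) ζ(s)`. At `s = 1 + z` the nonzero terms of `L(P k, s)` are
`m^k / m^(k(1 + z)) = 1 / m^(kz)`, whence `L(P k, 1 + z) = ζ(kz)`.
-/

open LSeries Set
open scoped LSeries.notation

lemma LSeries_eq_tsum_succ (f : ℕ → ℂ) (s : ℂ) :
    LSeries f s = ∑' n : ℕ, f (n + 1) / ((n + 1 : ℕ) : ℂ) ^ s := by
  have hsupp : Function.support (term f s) ⊆ range Nat.succ := fun n hn ↦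
    ⟨n - 1, Nat.succ_pred_eq_of_ne_zero (by rintro rfl; exact hn (term_zero f s))⟩
  rw [LSeries, ← Nat.succ_injective.tsum_eq hsupp]
  simp only [Nat.succ_eq_add_one, term_of_ne_zero (Nat.succ_ne_zero _)]

lemma LSeries.term_indicator (S : Set ℕ) (f : ℕ → ℂ) (s : ℂ) :
    term (S.indicator f) s = S.indicator (term f s) := by
  ext n
  by_cases hn : n ∈ S <;> simp [term_def, hn]

lemma LSeries.term_natCast_pow {k : ℕ} (hk : k ≠ 0) (z : ℂ) (m : ℕ) :
    term (fun n : ℕ ↦ (n : ℂ)) (1 + z) (m ^ k) = term 1 (k * z) m := by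
  rcases eq_or_ne m 0 with rfl | hm
  · simp [hk]
  have hmk : ((m ^ k : ℕ) : ℂ) ≠ 0 := by exact_mod_cast pow_ne_zero k hm
  rw [term_of_ne_zero (pow_ne_zero k hm), term_of_ne_zero hm, Complex.cpow_add _ _ hmk,
    Complex.cpow_one, div_mul_cancel_left₀ hmk, Pi.one_apply, one_div, Nat.cast_pow,
    Complex.natCast_cpow_natCast_mul]

lemma LSeriesHasSum_indicator_range_pow {k : ℕ} (hk : k ≠ 0) {z : ℂ}
    (hz : 1 < ((k : ℂ) * z).re) :
    LSeriesHasSum ((range (· ^ k)).indicator fun n : ℕ ↦ (n : ℂ)) (1 + z)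
      (riemannZeta (k * z)) := by
  have hzeta : HasSum (term 1 (k * z)) (riemannZeta (k * z)) :=
    LSeries_one_eq_riemannZeta hz ▸ (LSeriesSummable_one_iff.mpr hz).LSeriesHasSum
  rw [LSeriesHasSum, term_indicator,
    ← (Nat.pow_left_injective hk).hasSum_iff fun n hn ↦ indicator_of_notMem hn _]
  convert hzeta using 1
  ext m
  simp [term_natCast_pow hk]

lemma wk_eq_sum_divisors_indicator {k : ℕ} (hk : k ≠ 0) {r : ℕ} (hr : r ≠ 0) :
    wk k r = ∑ d ∈ r.divisors, (range (· ^ k)).indicator id d := by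
  classical
  simp only [wk, indicator_apply, ← Finset.sum_filter]
  refine Finset.sum_bij (fun m _ ↦ m ^ k) ?_ (fun a _ b _ h ↦ Nat.pow_left_injective hk h) ?_
    fun _ _ ↦ rfl
  · intro m hm
    simp only [Finset.mem_filter, Nat.mem_divisors] at hm ⊢
    exact ⟨⟨hm.2, hr⟩, m, rfl⟩
  · intro d hd
    simp only [Finset.mem_filter, Nat.mem_divisors] at hd
    obtain ⟨⟨hdvd, -⟩, m, rfl⟩ := hd
    have hm : m ≠ 0 := by rintro rfl; simp [hk, hr] at hdvd
    refine ⟨m, ?_, rfl⟩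
    simp only [Finset.mem_filter, Finset.mem_Icc]
    exact ⟨⟨Nat.one_le_iff_ne_zero.mpr hm,
      (Nat.le_self_pow hk m).trans (Nat.le_of_dvd (Nat.pos_of_ne_zero hr) hdvd)⟩, hdvd⟩

lemma natCast_wk_eq_convolution {k : ℕ} (hk : k ≠ 0) {r : ℕ} (hr : r ≠ 0) :
    (wk k r : ℂ) = ((range (· ^ k)).indicator (fun n : ℕ ↦ (n : ℂ)) ⍟ 1) r := by
  simp only [convolution_def, Pi.one_apply, mul_one]
  rw [Nat.sum_divisorsAntidiagonal fun d _ ↦ (range (· ^ k)).indicator (fun n : ℕ ↦ (n : ℂ)) d,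
    wk_eq_sum_divisors_indicator hk hr, Nat.cast_sum]
  exact Finset.sum_congr rfl fun d _ ↦
    (congrFun (indicator_comp_of_zero Nat.cast_zero) d).symm

theorem wk_dirichlet_series (k : ℕ) (hk : 1 ≤ k) (z : ℂ) (hz : 1 / (k : ℝ) < z.re) :
    ∑' r : ℕ, (wk k (r + 1) : ℂ) / ((r + 1 : ℕ) : ℂ) ^ ((1 : ℂ) + z) =
      riemannZeta (z + 1) * riemannZeta ((k : ℂ) * z) := by
  have hk0 : k ≠ 0 := by omega
  have hkz : 1 < ((k : ℂ) * z).re := by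
    have hre : ((k : ℂ) * z).re = k * z.re := by simp
    rwa [hre, ← div_lt_iff₀' (by positivity)]
  have h1z : 1 < (1 + z).re := by
    have hk_inv : 0 < 1 / (k : ℝ) := by positivity
    simp only [Complex.add_re, Complex.one_re]
    linarith
  have hpow := LSeriesHasSum_indicator_range_pow hk0 hkz
  have hone := LSeriesSummable_one_iff.mpr h1z
  calc ∑' r : ℕ, (wk k (r + 1) : ℂ) / ((r + 1 : ℕ) : ℂ) ^ ((1 : ℂ) + z)
      = LSeries (fun r ↦ (wk k r : ℂ)) (1 + z) :=
        (LSeries_eq_tsum_succ (fun r ↦ (wk k r : ℂ)) _).symm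
    _ = LSeries ((range (· ^ k)).indicator (fun n : ℕ ↦ (n : ℂ)) ⍟ 1) (1 + z) :=
      LSeries_congr (natCast_wk_eq_convolution hk0) _
    _ = riemannZeta (k * z) * riemannZeta (1 + z) := by
      rw [LSeries_convolution' hpow.LSeriesSummable hone, hpow.LSeries_eq,
        LSeries_one_eq_riemannZeta h1z]
    _ = _ := by rw [add_comm, mul_comm]
end

section
/- There exist positive constants c and C (depending only on k) such that for all integers n ≥ 1, c/n ≤ σ_n ≤ C·n^{-1/3}, where σ_n is the unique positive real with ∑_{r≥1} w_k(r) e^{-r σ_n} = n. -/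
open Real

lemma one_le_wk (k : ℕ) {r : ℕ} (hr : 1 ≤ r) : 1 ≤ wk k r := by
  have h1 : (1 : ℕ) ∈ Finset.Icc 1 r := by simp [hr]
  calc 1 = (if 1 ^ k ∣ r then 1 ^ k else 0) := by simp
    _ ≤ wk k r := Finset.single_le_sum (f := fun m => if m ^ k ∣ r then m ^ k else 0)
        (fun _ _ => Nat.zero_le _) h1

lemma wk_le_sq (k : ℕ) {r : ℕ} (hr : 1 ≤ r) : wk k r ≤ r ^ 2 := by
  calc wk k r ≤ ∑ _m ∈ Finset.Icc 1 r, r := by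
        refine Finset.sum_le_sum fun m _ => ?_
        split_ifs with hm
        · exact Nat.le_of_dvd hr hm
        · exact Nat.zero_le _
    _ = r ^ 2 := by simp [sq]

lemma hasSum_exp_neg_succ_mul {s : ℝ} (hs : 0 < s) :
    HasSum (fun r : ℕ => exp (-((r + 1 : ℕ) : ℝ) * s)) (1 / (exp s - 1)) := by
  have hgeom := (hasSum_geometric_of_lt_one (exp_pos (-s)).le
    (exp_lt_one_iff.2 (neg_lt_zero.2 hs))).mul_right (exp (-s))
  have hterm : ∀ r : ℕ, exp (-s) ^ r * exp (-s) = exp (-((r + 1 : ℕ) : ℝ) * s) := fun r => by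
    rw [← pow_succ, ← exp_nat_mul]
    ring_nf
  have hsum : (1 - exp (-s))⁻¹ * exp (-s) = 1 / (exp s - 1) := by
    have : exp s - 1 ≠ 0 := (sub_pos.2 (one_lt_exp_iff.2 hs)).ne'
    rw [exp_neg]
    field_simp
  simpa only [hterm, hsum] using hgeom

lemma sq_mul_exp_neg_le_four {t : ℝ} (ht : 0 ≤ t) : t ^ 2 * exp (-t) ≤ 4 := by
  have h : t / 2 + 1 ≤ exp (t / 2) := add_one_le_exp _
  have hsq : (t / 2 + 1) ^ 2 ≤ exp t := by
    calc (t / 2 + 1) ^ 2 ≤ exp (t / 2) ^ 2 := pow_le_pow_left₀ (by linarith) h 2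
      _ = exp t := by rw [← exp_nat_mul]; ring_nf
  rw [← le_div_iff₀ (exp_pos (-t)), exp_neg, div_inv_eq_mul]
  nlinarith

lemma sq_mul_exp_neg_mul_le {u s : ℝ} (hu : 0 ≤ u) (hs : 0 < s) :
    u ^ 2 * exp (-u * s) ≤ 16 / s ^ 2 * exp (-u * (s / 2)) := by
  have hpeak := sq_mul_exp_neg_le_four (mul_nonneg hu (half_pos hs).le)
  have hsplit : exp (-u * s) = exp (-(u * (s / 2))) * exp (-u * (s / 2)) := by
    rw [← exp_add]
    ring_nf
  calc u ^ 2 * exp (-u * s)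
      = 4 / s ^ 2 * ((u * (s / 2)) ^ 2 * exp (-(u * (s / 2)))) * exp (-u * (s / 2)) := by
        rw [hsplit]
        field_simp
        ring
    _ ≤ 4 / s ^ 2 * 4 * exp (-u * (s / 2)) := by gcongr
    _ = 16 / s ^ 2 * exp (-u * (s / 2)) := by ring

lemma one_div_exp_sub_one_le_tsum {w : ℕ → ℝ} {s : ℝ} (hs : 0 < s) (hw : ∀ r, 1 ≤ w r)
    (hsum : Summable fun r : ℕ => w r * exp (-((r + 1 : ℕ) : ℝ) * s)) :
    1 / (exp s - 1) ≤ ∑' r : ℕ, w r * exp (-((r + 1 : ℕ) : ℝ) * s) := by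
  rw [← (hasSum_exp_neg_succ_mul hs).tsum_eq]
  exact (hasSum_exp_neg_succ_mul hs).summable.tsum_le_tsum
    (fun r => le_mul_of_one_le_left (exp_pos _).le (hw r)) hsum

lemma tsum_le_of_le_sq {w : ℕ → ℝ} {s : ℝ} (hs : 0 < s) (hw0 : ∀ r, 0 ≤ w r)
    (hw : ∀ r, w r ≤ ((r + 1 : ℕ) : ℝ) ^ 2) :
    ∑' r : ℕ, w r * exp (-((r + 1 : ℕ) : ℝ) * s) ≤ 32 / s ^ 3 := by
  have hbound : ∀ r : ℕ, w r * exp (-((r + 1 : ℕ) : ℝ) * s) ≤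
      16 / s ^ 2 * exp (-((r + 1 : ℕ) : ℝ) * (s / 2)) := fun r =>
    (mul_le_mul_of_nonneg_right (hw r) (exp_pos _).le).trans
      (sq_mul_exp_neg_mul_le (Nat.cast_nonneg _) hs)
  have hmajorant := (hasSum_exp_neg_succ_mul (half_pos hs)).mul_left (16 / s ^ 2)
  have hsummable := hmajorant.summable.of_nonneg_of_le
    (fun r => mul_nonneg (hw0 r) (exp_pos _).le) hbound
  have hhalf : s / 2 ≤ exp (s / 2) - 1 := by linarith [add_one_le_exp (s / 2)]
  calc ∑' r : ℕ, w r * exp (-((r + 1 : ℕ) : ℝ) * s)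
      ≤ 16 / s ^ 2 * (1 / (exp (s / 2) - 1)) :=
        (hsummable.tsum_le_tsum hbound hmajorant.summable).trans_eq hmajorant.tsum_eq
    _ ≤ 16 / s ^ 2 * (1 / (s / 2)) := by gcongr
    _ = 32 / s ^ 3 := by field_simp; ring

lemma half_div_le_of_one_div_exp_sub_one_le {s N : ℝ} (hs : 0 < s) (hN : 1 ≤ N)
    (h : 1 / (exp s - 1) ≤ N) : 1 / 2 / N ≤ s := by
  have hpos : 0 < exp s - 1 := sub_pos.2 (one_lt_exp_iff.2 hs)
  have h1 : 1 ≤ N * (exp s - 1) := by rwa [div_le_iff₀ hpos] at h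
  rw [div_div, div_le_iff₀ (by positivity)]
  rcases le_or_gt s 1 with hs1 | hs1
  · have := abs_exp_sub_one_le (x := s) (by rwa [abs_of_pos hs])
    rw [abs_of_pos hpos, abs_of_pos hs] at this
    nlinarith
  · nlinarith

lemma le_four_mul_rpow_neg_one_third {s N : ℝ} (hs : 0 < s) (hN : 0 < N)
    (h : N ≤ 32 / s ^ 3) : s ≤ 4 * N ^ (-(1 : ℝ) / 3) := by
  have hcube : (4 * N ^ (-(1 : ℝ) / 3)) ^ 3 = 64 / N := by
    rw [mul_pow, ← rpow_natCast (N ^ _), ← rpow_mul hN.le]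
    norm_num [rpow_neg_one, div_eq_mul_inv]
  refine le_of_pow_le_pow_left₀ three_ne_zero (by positivity) ?_
  rw [hcube, le_div_iff₀ hN]
  rw [le_div_iff₀ (by positivity)] at h
  nlinarith [pow_pos hs 3]

theorem saddle_point_bounds_general (k : ℕ) (σ : ℕ → ℝ)
    (hσ : ∀ n : ℕ, 1 ≤ n → 0 < σ n ∧
      ∑' r : ℕ, (wk k (r + 1) : ℝ) * Real.exp (-((r + 1 : ℕ) : ℝ) * σ n) = n) :
    ∃ c C : ℝ, 0 < c ∧ 0 < C ∧ ∀ n : ℕ, 1 ≤ n →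
      c / n ≤ σ n ∧ σ n ≤ C * (n : ℝ) ^ (-(1 : ℝ) / 3) := by
  refine ⟨1 / 2, 4, by norm_num, by norm_num, fun n hn => ?_⟩
  obtain ⟨hs, hsum⟩ := hσ n hn
  have hn1 : (1 : ℝ) ≤ n := by exact_mod_cast hn
  have hsummable : Summable fun r : ℕ => (wk k (r + 1) : ℝ) * exp (-((r + 1 : ℕ) : ℝ) * σ n) := by
    by_contra h
    rw [tsum_eq_zero_of_not_summable h] at hsum
    linarith
  constructor
  · refine half_div_le_of_one_div_exp_sub_one_le hs hn1 (hsum ▸ ?_)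
    exact one_div_exp_sub_one_le_tsum hs
      (fun r => by exact_mod_cast one_le_wk k r.succ_pos) hsummable
  · refine le_four_mul_rpow_neg_one_third hs (by linarith) (hsum ▸ ?_)
    exact tsum_le_of_le_sq hs (fun r => by positivity)
      (fun r => by exact_mod_cast wk_le_sq k r.succ_pos)

theorem saddle_point_bounds (k : ℕ) (hk : 1 ≤ k) (σ : ℕ → ℝ)
    (hσ : ∀ n : ℕ, 1 ≤ n → 0 < σ n ∧
      ∑' r : ℕ, (wk k (r + 1) : ℝ) * Real.exp (-((r + 1 : ℕ) : ℝ) * σ n) = n) :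
    ∃ c C : ℝ, 0 < c ∧ 0 < C ∧ ∀ n : ℕ, 1 ≤ n →
      c / n ≤ σ n ∧ σ n ≤ C * (n : ℝ) ^ (-(1 : ℝ) / 3) :=
  saddle_point_bounds_general k σ hσ
end

section
/- For all real σ > 0 and all real τ, |F_k(σ+iτ)|² ≤ |F_k(σ)|² · ∏_{m≥1} (1 + 16 ‖m^k τ/(2π)‖² / (e^{m^k σ}(1 - e^{-m^k σ})²))^{-1}, where F_k(s) = ∏_{m≥1}(1 - e^{-m^k s})^{-1}. -/
open Complex

/-- Distance from a real number to the nearest integer. -/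
noncomputable def distNearestInt (x : ℝ) : ℝ := |x - round x|

/-- `F_k(s) = ∏_{m ≥ 1} (1 - e^{-m^k s})⁻¹`. -/
noncomputable def Fk (k : ℕ) (s : ℂ) : ℂ :=
  ∏' m : ℕ, (1 - Complex.exp (-((m + 1 : ℕ) : ℂ) ^ k * s))⁻¹

/-!
With `x = e^{-m^k σ}` and `θ = m^k τ`, the `m`-th factor satisfies
`|1 - x e^{-iθ}|² = (1 - x)² + 2x(1 - cos θ)`, and Jordan's inequality gives
`1 - cos θ ≥ 8 ‖θ / 2π‖²`. So the bound holds factor by factor, and it passes to the infinite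
products because `∑ e^{-m^k σ} < ∞` makes all of them converge.
-/

open Real

theorem tprod_le_tprod_of_nonneg {ι α : Type*} [CommSemiring α] [PartialOrder α] [IsOrderedRing α]
    [TopologicalSpace α] [OrderClosedTopology α] {f g : ι → α} (hf₀ : ∀ i, 0 ≤ f i)
    (h : ∀ i, f i ≤ g i) (hf : Multipliable f) (hg : Multipliable g) :
    ∏' i, f i ≤ ∏' i, g i :=
  le_of_tendsto_of_tendsto' hf.hasProd hg.hasProd fun _ ↦
    Finset.prod_le_prod (fun i _ ↦ hf₀ i) fun i _ ↦ h i

theorem multipliable_inv_one_sub {ι K : Type*} [NormedField K] [CompleteSpace K] {w : ι → K}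
    (hw : Summable (‖w ·‖)) (hw1 : ∀ i, w i ≠ 1) : Multipliable fun i ↦ (1 - w i)⁻¹ := by
  have hsub : ∀ i, 1 - w i ≠ 0 := fun i ↦ sub_ne_zero.mpr (hw1 i).symm
  have hinv : ∀ i, (1 - w i)⁻¹ = 1 + w i / (1 - w i) := fun i ↦ by
    field_simp [hsub i]; ring
  simp_rw [hinv]
  refine multipliable_one_add_of_summable ((hw.mul_left 2).of_norm_bounded_eventually ?_)
  filter_upwards [hw.tendsto_cofinite_zero.eventually_le_const one_half_pos] with i hi
  have h1w : 1 / 2 ≤ ‖1 - w i‖ := by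
    have := norm_sub_norm_le (1 : K) (w i)
    rw [norm_one] at this
    linarith
  rw [norm_norm, norm_div, div_le_iff₀ (by linarith)]
  nlinarith [norm_nonneg (w i)]

theorem multipliable_inv_one_add_of_nonneg {ι : Type*} {c : ι → ℝ} (hc₀ : ∀ i, 0 ≤ c i)
    (hc : Summable c) : Multipliable fun i ↦ (1 + c i)⁻¹ := by
  simpa only [sub_neg_eq_add] using multipliable_inv_one_sub (w := fun i ↦ -c i)
    (by simpa only [norm_neg, Real.norm_of_nonneg (hc₀ _)] using hc)
    fun i ↦ ((neg_nonpos.mpr (hc₀ i)).trans_lt one_pos).ne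

theorem distNearestInt_sq_le (y : ℝ) : distNearestInt y ^ 2 ≤ 1 / 4 := by
  have := pow_le_pow_left₀ (abs_nonneg _) (abs_sub_round y) 2
  norm_num [distNearestInt] at this ⊢
  exact this

theorem eight_mul_distNearestInt_sq_le_one_sub_cos (θ : ℝ) :
    8 * distNearestInt (θ / (2 * π)) ^ 2 ≤ 1 - Real.cos θ := by
  set y := θ / (2 * π) - round (θ / (2 * π))
  have hcos : Real.cos θ = 1 - 2 * Real.sin (π * y) ^ 2 := by
    have : θ = 2 * (π * y) + round (θ / (2 * π)) * (2 * π) := by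
      simp only [y]; field_simp; ring
    rw [this, Real.cos_add_int_mul_two_pi, Real.cos_two_mul, Real.cos_sq']
    ring
  have hjordan : 2 * |y| ≤ |Real.sin (π * y)| := by
    have hy : |π * y| ≤ π / 2 := by
      rw [abs_mul, abs_of_pos pi_pos]
      nlinarith [abs_sub_round (θ / (2 * π)), pi_pos]
    have h := mul_abs_le_abs_sin hy
    rwa [abs_mul, abs_of_pos pi_pos, ← mul_assoc, div_mul_cancel₀ _ pi_ne_zero] at h
  have hsq := pow_le_pow_left₀ (by positivity) hjordan 2
  rw [mul_pow, sq_abs, sq_abs] at hsq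
  rw [hcos, distNearestInt, sq_abs]
  linarith

theorem norm_one_sub_cexp_sq (z : ℂ) :
    ‖1 - cexp z‖ ^ 2 = (1 - rexp z.re) ^ 2 + 2 * rexp z.re * (1 - Real.cos z.im) := by
  rw [Complex.sq_norm, Complex.normSq_apply]
  simp only [sub_re, sub_im, one_re, one_im, exp_re, exp_im]
  linear_combination (rexp z.re) ^ 2 * Real.sin_sq_add_cos_sq z.im

theorem norm_inv_one_sub_cexp_sq_le {a : ℝ} (ha : 0 < a) (b : ℝ) :
    ‖(1 - cexp (-(a + b * I)))⁻¹‖ ^ 2 ≤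
      ‖(1 - cexp (-a))⁻¹‖ ^ 2 *
        (1 + 16 * distNearestInt (b / (2 * π)) ^ 2 / (rexp a * (1 - rexp (-a)) ^ 2))⁻¹ := by
  set x := rexp (-a)
  have hx0 : 0 < x := exp_pos _
  have hx1 : x < 1 := exp_lt_one_iff.mpr (neg_lt_zero.mpr ha)
  have hexp : rexp a = x⁻¹ := by simp only [x, Real.exp_neg, inv_inv]
  have hnum : ‖1 - cexp (-(a + b * I))‖ ^ 2 = (1 - x) ^ 2 + 2 * x * (1 - Real.cos b) := by
    simp [norm_one_sub_cexp_sq, x]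
  have hden : ‖1 - cexp (-a)‖ ^ 2 = (1 - x) ^ 2 := by
    simp [norm_one_sub_cexp_sq, x]
  have hd := eight_mul_distNearestInt_sq_le_one_sub_cos b
  rw [norm_inv, norm_inv, inv_pow, inv_pow, hnum, hden, hexp, ← mul_inv]
  have h1x : 0 < 1 - x := by linarith
  refine inv_anti₀ (by positivity) ?_
  calc (1 - x) ^ 2 * (1 + 16 * distNearestInt (b / (2 * π)) ^ 2 / (x⁻¹ * (1 - x) ^ 2))
      = (1 - x) ^ 2 + 2 * x * (8 * distNearestInt (b / (2 * π)) ^ 2) := by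
        field_simp; ring
    _ ≤ (1 - x) ^ 2 + 2 * x * (1 - Real.cos b) := by gcongr

theorem summable_exp_neg_natCast_succ_pow_mul {k : ℕ} (hk : 1 ≤ k) {σ : ℝ} (hσ : 0 < σ) :
    Summable fun m : ℕ ↦ rexp (-(((m + 1 : ℕ) : ℝ) ^ k * σ)) := by
  refine (summable_geometric_of_lt_one (exp_nonneg _)
    (exp_lt_one_iff.mpr (neg_lt_zero.mpr hσ))).of_nonneg_of_le (fun _ ↦ (exp_pos _).le)
    fun m ↦ ?_
  rw [← Real.exp_nat_mul, exp_le_exp]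
  have hm : (m : ℝ) ≤ ((m + 1 : ℕ) : ℝ) ^ k :=
    (Nat.cast_le.mpr m.le_succ).trans (le_self_pow₀ (by simp) (by omega))
  nlinarith

theorem sixteen_mul_distNearestInt_sq_div_le (y : ℝ) {σ a : ℝ} (hσ : 0 < σ) (ha : σ ≤ a) :
    16 * distNearestInt y ^ 2 / (rexp a * (1 - rexp (-a)) ^ 2) ≤
      4 / (1 - rexp (-σ)) ^ 2 * rexp (-a) := by
  have hσ1 : 0 < 1 - rexp (-σ) := by simp [hσ]
  have hσa : 1 - rexp (-σ) ≤ 1 - rexp (-a) := by gcongr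
  calc 16 * distNearestInt y ^ 2 / (rexp a * (1 - rexp (-a)) ^ 2)
      ≤ 16 * (1 / 4) / (rexp a * (1 - rexp (-σ)) ^ 2) := by
        gcongr
        exact distNearestInt_sq_le y
    _ = 4 / (1 - rexp (-σ)) ^ 2 * rexp (-a) := by
        rw [Real.exp_neg a]; field_simp; ring

theorem norm_cexp_neg_natCast_pow_mul (n k : ℕ) (s : ℂ) :
    ‖cexp (-(n : ℂ) ^ k * s)‖ = rexp (-((n : ℝ) ^ k * s.re)) := by
  rw [norm_exp, neg_mul, neg_re, ← ofReal_natCast, ← ofReal_pow, re_ofReal_mul]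

theorem multipliable_inv_one_sub_cexp_neg_succ_pow_mul {k : ℕ} (hk : 1 ≤ k) {s : ℂ}
    (hs : 0 < s.re) :
    Multipliable fun m : ℕ ↦ (1 - cexp (-((m + 1 : ℕ) : ℂ) ^ k * s))⁻¹ := by
  refine multipliable_inv_one_sub ?_ fun m h ↦ ?_
  · simpa only [norm_cexp_neg_natCast_pow_mul] using summable_exp_neg_natCast_succ_pow_mul hk hs
  · have := norm_cexp_neg_natCast_pow_mul (m + 1) k s
    rw [h, norm_one, eq_comm, Real.exp_eq_one_iff, neg_eq_zero] at this
    exact (mul_pos (by positivity) hs).ne' this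

theorem Fk_ratio_bound (k : ℕ) (hk : 1 ≤ k) (σ : ℝ) (hσ : 0 < σ) (τ : ℝ) :
    ‖Fk k ((σ : ℂ) + τ * Complex.I)‖ ^ 2 ≤
      ‖Fk k (σ : ℂ)‖ ^ 2 *
        ∏' m : ℕ,
          (1 + 16 * distNearestInt (((m + 1 : ℕ) : ℝ) ^ k * τ / (2 * Real.pi)) ^ 2 /
              (Real.exp (((m + 1 : ℕ) : ℝ) ^ k * σ) *
                (1 - Real.exp (-((m + 1 : ℕ) : ℝ) ^ k * σ)) ^ 2))⁻¹ := by
  have hn : ∀ m : ℕ, σ ≤ ((m + 1 : ℕ) : ℝ) ^ k * σ := fun m ↦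
    le_mul_of_one_le_left hσ.le (one_le_pow₀ (by simp))
  simp only [neg_mul]
  have hC : Multipliable fun m : ℕ ↦
      (1 + 16 * distNearestInt (((m + 1 : ℕ) : ℝ) ^ k * τ / (2 * π)) ^ 2 /
        (rexp (((m + 1 : ℕ) : ℝ) ^ k * σ) * (1 - rexp (-(((m + 1 : ℕ) : ℝ) ^ k * σ))) ^ 2))⁻¹ :=
    multipliable_inv_one_add_of_nonneg (fun _ ↦ by positivity)
      (((summable_exp_neg_natCast_succ_pow_mul hk hσ).mul_left _).of_nonneg_of_le
        (fun _ ↦ by positivity) fun m ↦ sixteen_mul_distNearestInt_sq_div_le _ hσ (hn m))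
  have hτ := multipliable_inv_one_sub_cexp_neg_succ_pow_mul hk (s := σ + τ * I) (by simpa)
  have h0 := multipliable_inv_one_sub_cexp_neg_succ_pow_mul hk (s := σ) (by simpa)
  rw [Fk, Fk, hτ.norm_tprod, h0.norm_tprod, ← hτ.norm.tprod_pow, ← h0.norm.tprod_pow,
    ← (h0.norm.pow 2).tprod_mul hC]
  refine tprod_le_tprod_of_nonneg (fun _ ↦ by positivity) (fun m ↦ ?_) (hτ.norm.pow 2)
    ((h0.norm.pow 2).mul hC)
  have hτm : -((m + 1 : ℕ) : ℂ) ^ k * (σ + τ * I) =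
      -(((((m + 1 : ℕ) : ℝ) ^ k * σ : ℝ) : ℂ) + ((((m + 1 : ℕ) : ℝ) ^ k * τ : ℝ) : ℂ) * I) := by
    push_cast; ring
  have hσm : -((m + 1 : ℕ) : ℂ) ^ k * σ = -((((m + 1 : ℕ) : ℝ) ^ k * σ : ℝ) : ℂ) := by
    push_cast; ring
  rw [hτm, hσm]
  exact norm_inv_one_sub_cexp_sq_le (by positivity) _
end

section
/- For real σ > 0 and |τ| ≤ 2πσ, the sum S(τ;σ) := ∑_{(4σ)^{-1/k} < m ≤ (2σ)^{-1/k}} ‖m^k τ/(2π)‖² equals ∑_{(4σ)^{-1/k} < m ≤ (2σ)^{-1/k}} m^{2k} τ²/(4π²), and there exist constants 0 < c ≤ C depending only on k such that c·τ² σ^{-(2+1/k)} ≤ S(τ;σ) ≤ C·τ² σ^{-(2+1/k)} for all sufficiently small σ. -/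
open Real

open Classical in
/-- `S(τ;σ) = ∑_{(4σ)^{-1/k} < m ≤ (2σ)^{-1/k}} ‖m^k τ/(2π)‖²`. -/
noncomputable def Ssum (k : ℕ) (τ σ : ℝ) : ℝ :=
  ∑ m ∈ Finset.Icc 1 ⌊(2 * σ) ^ (-(1 : ℝ) / k)⌋₊,
    if (4 * σ) ^ (-(1 : ℝ) / k) < (m : ℝ) then
      distNearestInt ((m : ℝ) ^ k * τ / (2 * π)) ^ 2
    else 0

/-!
For `m ≤ (2σ)^{-1/k}` and `|τ| ≤ 2πσ` the number `m^k τ/(2π)` lies in `[-1/2, 1/2]`, where the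
distance to the nearest integer is the absolute value; this gives the exact formula. The sum
`∑ m^{2k}` runs over a window `(δ² s, δ s]` with `s = σ^{-1/k}` and `δ = 2^{-1/k}`, of length
`δ(1-δ)s`; bounding the number of terms and each term from both sides gives the order
`s^{2k+1} = σ^{-(2+1/k)}` as soon as the window contains at least two units.
-/

lemma distNearestInt_eq_abs_of_abs_le_half {x : ℝ} (hx : |x| ≤ 1 / 2) :
    distNearestInt x = |x| := by
  obtain ⟨hlo, hhi⟩ := abs_le.1 hx
  rcases hhi.lt_or_eq with hlt | rfl
  · rw [distNearestInt, round_eq_zero_iff.2 ⟨hlo, hlt⟩, Int.cast_zero, sub_zero]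
  · norm_num [distNearestInt, round_eq]

section Window

open Finset

lemma sum_Icc_one_floor_ite_lt {A : ℝ} (hA : 0 ≤ A) (N : ℕ) (f : ℕ → ℝ) :
    ∑ m ∈ Icc 1 N, (if A < (m : ℝ) then f m else 0) = ∑ m ∈ Ioc ⌊A⌋₊ N, f m := by
  rw [← sum_filter]
  refine sum_congr (ext fun m => ?_) fun _ _ => rfl
  simp only [mem_filter, mem_Icc, mem_Ioc, Nat.floor_lt hA]
  constructor
  · rintro ⟨⟨_, hmN⟩, hAm⟩
    exact ⟨hAm, hmN⟩
  · rintro ⟨hAm, hmN⟩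
    exact ⟨⟨Nat.cast_pos.1 (hA.trans_lt hAm), hmN⟩, hAm⟩

variable {A B : ℝ}

lemma sum_Ioc_floor_pow_le (hB : 0 ≤ B) (n : ℕ) :
    ∑ m ∈ Ioc ⌊A⌋₊ ⌊B⌋₊, (m : ℝ) ^ n ≤ B ^ (n + 1) := by
  have hcard : ((Ioc ⌊A⌋₊ ⌊B⌋₊).card : ℝ) ≤ B := by
    rw [Nat.card_Ioc]
    exact (Nat.cast_le.2 (Nat.sub_le _ _)).trans (Nat.floor_le hB)
  calc ∑ m ∈ Ioc ⌊A⌋₊ ⌊B⌋₊, (m : ℝ) ^ n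
      ≤ (Ioc ⌊A⌋₊ ⌊B⌋₊).card • B ^ n := by
        refine sum_le_card_nsmul _ _ _ fun m hm => pow_le_pow_left₀ m.cast_nonneg ?_ n
        exact (Nat.cast_le.2 (mem_Ioc.1 hm).2).trans (Nat.floor_le hB)
    _ ≤ B * B ^ n := by
        rw [nsmul_eq_mul]
        exact mul_le_mul_of_nonneg_right hcard (by positivity)
    _ = B ^ (n + 1) := (pow_succ' B n).symm

lemma half_sub_mul_pow_le_sum_Ioc_floor (hA : 0 ≤ A) (hAB : 2 ≤ B - A) (n : ℕ) :
    (B - A) / 2 * A ^ n ≤ ∑ m ∈ Ioc ⌊A⌋₊ ⌊B⌋₊, (m : ℝ) ^ n := by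
  have hcard : (B - A) / 2 ≤ ((Ioc ⌊A⌋₊ ⌊B⌋₊).card : ℝ) := by
    have hsub : (⌊B⌋₊ : ℝ) - ⌊A⌋₊ ≤ ((⌊B⌋₊ - ⌊A⌋₊ : ℕ) : ℝ) :=
      sub_le_iff_le_add.2 (by exact_mod_cast le_tsub_add)
    rw [Nat.card_Ioc]
    linarith [Nat.sub_one_lt_floor B, Nat.floor_le hA]
  calc (B - A) / 2 * A ^ n
      ≤ (Ioc ⌊A⌋₊ ⌊B⌋₊).card * A ^ n :=
        mul_le_mul_of_nonneg_right hcard (by positivity)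
    _ ≤ ∑ m ∈ Ioc ⌊A⌋₊ ⌊B⌋₊, (m : ℝ) ^ n := by
        rw [← nsmul_eq_mul]
        refine card_nsmul_le_sum _ _ _ fun m hm => pow_le_pow_left₀ hA ?_ n
        exact ((Nat.floor_lt hA).1 (mem_Ioc.1 hm).1).le

end Window

section Rpow

variable {k : ℕ} {σ : ℝ}

lemma rpow_neg_one_div_pow (hσ : 0 ≤ σ) (hk : k ≠ 0) : (σ ^ (-(1 : ℝ) / k)) ^ k = σ⁻¹ := by
  rw [neg_div, rpow_neg hσ, inv_pow, one_div, rpow_inv_natCast_pow hσ hk]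

lemma rpow_neg_two_add_one_div (hσ : 0 < σ) :
    σ ^ (-(2 + 1 / (k : ℝ))) = σ ^ (-(1 : ℝ) / k) * σ⁻¹ ^ 2 := by
  rw [show -(2 + 1 / (k : ℝ)) = -(1 : ℝ) / k + (-2 : ℤ) by push_cast; ring,
    rpow_add hσ, rpow_intCast, zpow_neg, inv_pow, zpow_ofNat]

lemma two_rpow_neg_one_div_lt_one (hk : k ≠ 0) : (2 : ℝ) ^ (-(1 : ℝ) / k) < 1 :=
  rpow_lt_one_of_one_lt_of_neg one_lt_two
    (by rw [neg_div, neg_lt_zero]; exact one_div_pos.2 (Nat.cast_pos.2 (Nat.pos_of_ne_zero hk)))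

end Rpow

section Ssum

open Finset

variable {k : ℕ} {τ σ : ℝ}

lemma Ssum_eq_sum_sq (hk : k ≠ 0) (hσ : 0 < σ) (hτ : |τ| ≤ 2 * π * σ) :
    Ssum k τ σ =
      ∑ m ∈ Icc 1 ⌊(2 * σ) ^ (-(1 : ℝ) / k)⌋₊,
        if (4 * σ) ^ (-(1 : ℝ) / k) < (m : ℝ) then
          (m : ℝ) ^ (2 * k) * τ ^ 2 / (4 * π ^ 2)
        else 0 := by
  refine sum_congr rfl fun m hm => ?_
  split_ifs with hAm
  · have hmB : (m : ℝ) ≤ (2 * σ) ^ (-(1 : ℝ) / k) :=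
      (Nat.cast_le.2 (mem_Icc.1 hm).2).trans (Nat.floor_le (by positivity))
    have hmk : (m : ℝ) ^ k ≤ (2 * σ)⁻¹ := by
      rw [← rpow_neg_one_div_pow (by positivity : (0 : ℝ) ≤ 2 * σ) hk]
      exact pow_le_pow_left₀ m.cast_nonneg hmB k
    have hhalf : |(m : ℝ) ^ k * τ / (2 * π)| ≤ 1 / 2 := by
      rw [abs_div, abs_mul, abs_of_nonneg (by positivity : (0 : ℝ) ≤ (m : ℝ) ^ k),
        abs_of_pos (by positivity : (0 : ℝ) < 2 * π), div_le_iff₀ (by positivity)]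
      calc (m : ℝ) ^ k * |τ| ≤ (2 * σ)⁻¹ * (2 * π * σ) :=
            mul_le_mul hmk hτ (abs_nonneg τ) (by positivity)
        _ = 1 / 2 * (2 * π) := by field_simp
    rw [distNearestInt_eq_abs_of_abs_le_half hhalf, sq_abs]
    ring
  · rfl

lemma Ssum_eq_mul_sum_Ioc (hk : k ≠ 0) (hσ : 0 < σ) (hτ : |τ| ≤ 2 * π * σ) :
    Ssum k τ σ = τ ^ 2 / (4 * π ^ 2) *
      ∑ m ∈ Ioc ⌊(4 * σ) ^ (-(1 : ℝ) / k)⌋₊ ⌊(2 * σ) ^ (-(1 : ℝ) / k)⌋₊, (m : ℝ) ^ (2 * k) := by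
  rw [Ssum_eq_sum_sq hk hσ hτ, mul_sum, ← sum_Icc_one_floor_ite_lt (by positivity)]
  refine sum_congr rfl fun m _ => ?_
  split_ifs <;> ring

lemma Ssum_le (hk : k ≠ 0) (hσ : 0 < σ) (hτ : |τ| ≤ 2 * π * σ) :
    Ssum k τ σ ≤ 1 / (4 * π ^ 2) * τ ^ 2 * σ ^ (-(2 + 1 / (k : ℝ))) := by
  have h2σ : (0 : ℝ) < 2 * σ := by positivity
  have hsum := sum_Ioc_floor_pow_le (A := (4 * σ) ^ (-(1 : ℝ) / k))
    (rpow_nonneg h2σ.le (-(1 : ℝ) / k)) (2 * k)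
  have hB : ((2 * σ) ^ (-(1 : ℝ) / k)) ^ (2 * k + 1) = (2 * σ) ^ (-(2 + 1 / (k : ℝ))) := by
    rw [rpow_neg_two_add_one_div h2σ, pow_succ', pow_mul', rpow_neg_one_div_pow h2σ.le hk]
  have hmono : (2 * σ) ^ (-(2 + 1 / (k : ℝ))) ≤ σ ^ (-(2 + 1 / (k : ℝ))) :=
    rpow_le_rpow_of_nonpos hσ (by linarith) (neg_nonpos.2 (by positivity))
  rw [Ssum_eq_mul_sum_Ioc hk hσ hτ, one_div_mul_eq_div]
  gcongr
  linarith

lemma le_Ssum (hk : k ≠ 0) (hσ : 0 < σ)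
    (hσ₀ : σ < (2 ^ (-(1 : ℝ) / k) * (1 - 2 ^ (-(1 : ℝ) / k)) / 2) ^ k)
    (hτ : |τ| ≤ 2 * π * σ) :
    2 ^ (-(1 : ℝ) / k) * (1 - 2 ^ (-(1 : ℝ) / k)) / (128 * π ^ 2) * τ ^ 2 *
      σ ^ (-(2 + 1 / (k : ℝ))) ≤ Ssum k τ σ := by
  set δ : ℝ := 2 ^ (-(1 : ℝ) / k)
  set s : ℝ := σ ^ (-(1 : ℝ) / k)
  have hδ : 0 < δ := by positivity
  have hgap : 0 < δ * (1 - δ) := mul_pos hδ (sub_pos.2 (two_rpow_neg_one_div_lt_one hk))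
  have hs : 0 < s := rpow_pos_of_pos hσ _
  have hδk : δ ^ k = 1 / 2 := by rw [rpow_neg_one_div_pow zero_le_two hk, one_div]
  have hB : (2 * σ) ^ (-(1 : ℝ) / k) = δ * s := mul_rpow zero_le_two hσ.le
  have hA : (4 * σ) ^ (-(1 : ℝ) / k) = δ * (δ * s) := by
    rw [← hB, ← mul_rpow zero_le_two (by positivity)]
    ring_nf
  -- `s ^ k = σ⁻¹`, so `s` exceeds `2 / (δ (1 - δ))` exactly when `σ` is below the threshold.
  have hs_large : 2 ≤ δ * (1 - δ) * s := by
    have hpow : (2 / (δ * (1 - δ))) ^ k < s ^ k := by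
      rw [rpow_neg_one_div_pow hσ.le hk, ← inv_div, inv_pow]
      exact (inv_lt_inv₀ (pow_pos (half_pos hgap) k) hσ).2 hσ₀
    have := lt_of_pow_lt_pow_left₀ k hs.le hpow
    rw [div_lt_iff₀ hgap] at this
    linarith
  have hsum := half_sub_mul_pow_le_sum_Ioc_floor (A := δ * (δ * s)) (B := δ * s)
    (by positivity) (by nlinarith) (2 * k)
  have hlower : δ * (1 - δ) / 32 * σ ^ (-(2 + 1 / (k : ℝ))) = (δ * s - δ * (δ * s)) / 2 *
      (δ * (δ * s)) ^ (2 * k) := by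
    rw [rpow_neg_two_add_one_div hσ, ← rpow_neg_one_div_pow hσ.le hk, mul_pow, mul_pow,
      pow_mul', pow_mul', hδk]
    ring
  rw [Ssum_eq_mul_sum_Ioc hk hσ hτ, hA, hB]
  calc δ * (1 - δ) / (128 * π ^ 2) * τ ^ 2 * σ ^ (-(2 + 1 / (k : ℝ)))
      = τ ^ 2 / (4 * π ^ 2) * (δ * (1 - δ) / 32 * σ ^ (-(2 + 1 / (k : ℝ)))) := by ring
    _ ≤ _ := by
      rw [hlower]
      gcongr

end Ssum

open Classical in
theorem Ssum_eval (k : ℕ) (hk : 1 ≤ k) :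
    (∀ σ : ℝ, 0 < σ → ∀ τ : ℝ, |τ| ≤ 2 * π * σ →
      Ssum k τ σ =
        ∑ m ∈ Finset.Icc 1 ⌊(2 * σ) ^ (-(1 : ℝ) / k)⌋₊,
          if (4 * σ) ^ (-(1 : ℝ) / k) < (m : ℝ) then
            (m : ℝ) ^ (2 * k) * τ ^ 2 / (4 * π ^ 2)
          else 0) ∧
    ∃ c C : ℝ, 0 < c ∧ c ≤ C ∧ ∃ σ₀ : ℝ, 0 < σ₀ ∧
      ∀ σ : ℝ, 0 < σ → σ < σ₀ → ∀ τ : ℝ, |τ| ≤ 2 * π * σ →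
        c * τ ^ 2 * σ ^ (-(2 + 1 / (k : ℝ))) ≤ Ssum k τ σ ∧
        Ssum k τ σ ≤ C * τ ^ 2 * σ ^ (-(2 + 1 / (k : ℝ))) := by
  have hk0 : k ≠ 0 := Nat.one_le_iff_ne_zero.1 hk
  set δ : ℝ := 2 ^ (-(1 : ℝ) / k)
  have hδ : 0 < δ := by positivity
  have hδ1 : δ < 1 := two_rpow_neg_one_div_lt_one hk0
  have hgap : 0 < δ * (1 - δ) := mul_pos hδ (sub_pos.2 hδ1)
  refine ⟨fun σ hσ τ hτ => Ssum_eq_sum_sq hk0 hσ hτ,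
    δ * (1 - δ) / (128 * π ^ 2), 1 / (4 * π ^ 2), by have := pi_pos; positivity, ?_,
    (δ * (1 - δ) / 2) ^ k, pow_pos (half_pos hgap) k,
    fun σ hσ hσ₀ τ hτ => ⟨le_Ssum hk0 hσ hσ₀ hτ, Ssum_le hk0 hσ hτ⟩⟩
  have hgap_le : δ * (1 - δ) ≤ 1 := by nlinarith
  rw [div_le_div_iff₀ (by positivity) (by positivity)]
  nlinarith [sq_nonneg π]
end
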